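/- arXiv:1902.05885 — 3 statements merged into one kernel-verified Lean document; each statement's English description precedes it below -/
import Mathlib

section
/- Let A and B be Noetherian integral domains with A of finite Krull dimension, and let f : A → B be an injective ring homomorphism making B a finitely generated A-module. If Σ is a dense subset of the prime spectrum Spec A (with its Zariski topology), then the set of primes q of B whose contraction f⁻¹(q) lies in Σ is dense in Spec B. -/
/-- Let `A` and `B` be Noetherian integral domains with `A` of finite Krull dimension, and let
`A → B` be an injective ring homomorphism making `B` a finitely generated `A`-module.  If `Σ`
is a dense subset of `Spec A` (Zariski topology), then the set of primes of `B` contracting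
into `Σ` is dense in `Spec B`. -/
theorem stmt_5 {A B : Type*} [CommRing A] [IsDomain A] [IsNoetherianRing A]
    [CommRing B] [IsDomain B] [IsNoetherianRing B] [Algebra A B] [Module.Finite A B]
    (hdim : ringKrullDim A ≠ ⊤)
    (hinj : Function.Injective (algebraMap A B))
    (S : Set (PrimeSpectrum A)) (hS : Dense S) :
    Dense {q : PrimeSpectrum B | PrimeSpectrum.comap (algebraMap A B) q ∈ S} := by
  have : Algebra.IsIntegral A B := Algebra.IsIntegral.of_finite A B
  rw [dense_iff_inter_open]
  intro U hU hUne
  set C : Set (PrimeSpectrum B) := Uᶜ with hC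
  have hCclosed : IsClosed C := hU.isClosed_compl
  have hImClosed : IsClosed (PrimeSpectrum.comap (algebraMap A B) '' C) :=
    PrimeSpectrum.isClosedMap_comap_of_isIntegral _
      (Algebra.isIntegral_def.mp ‹Algebra.IsIntegral A B›) C hCclosed
  -- the generic point of Spec A
  set η : PrimeSpectrum A := ⟨⊥, Ideal.bot_prime⟩ with hη
  have hηnot : η ∉ PrimeSpectrum.comap (algebraMap A B) '' C := by
    rintro ⟨q, hqC, hq⟩
    have hqbot : q.asIdeal = ⊥ := by
      apply Ideal.eq_bot_of_comap_eq_bot (R := A)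
      have := congrArg PrimeSpectrum.asIdeal hq
      exact this
    -- then q is the generic point of Spec B, so C = univ, contradiction
    have hgen : ∀ x : PrimeSpectrum B, x ∈ closure ({q} : Set (PrimeSpectrum B)) := by
      intro x
      refine ((PrimeSpectrum.le_iff_specializes q x).mp ?_).mem_closure
      show q.asIdeal ≤ x.asIdeal
      rw [hqbot]; exact bot_le
    obtain ⟨u, hu⟩ := hUne
    have : u ∈ C := hCclosed.closure_subset (closure_mono (Set.singleton_subset_iff.mpr hqC)
      (hgen u))
    exact this hu
  have hopen : IsOpen (PrimeSpectrum.comap (algebraMap A B) '' C)ᶜ := hImClosed.isOpen_compl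
  obtain ⟨p, hp, hpS⟩ := hS.inter_open_nonempty _ hopen ⟨η, hηnot⟩
  -- lift p to a prime of B
  obtain ⟨Q, -, hQprime, hQcomap⟩ :=
    Ideal.exists_ideal_over_prime_of_isIntegral (R := A) (S := B) p.asIdeal ⊥
      (by rw [← RingHom.ker_eq_comap_bot, (RingHom.injective_iff_ker_eq_bot _).mp hinj]
          exact bot_le)
  have hcq : PrimeSpectrum.comap (algebraMap A B) ⟨Q, hQprime⟩ = p :=
    PrimeSpectrum.ext (x := PrimeSpectrum.comap (algebraMap A B) ⟨Q, hQprime⟩) (y := p) hQcomap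
  refine ⟨⟨Q, hQprime⟩, ?_, ?_⟩
  · by_contra h
    exact hp ⟨⟨Q, hQprime⟩, h, hcq⟩
  · show PrimeSpectrum.comap (algebraMap A B) ⟨Q, hQprime⟩ ∈ S
    rw [hcq]; exact hpS
end

section
/- Let X be a topological space each of whose irreducible components has topological Krull dimension equal to 2, let F be a closed subset of X of topological Krull dimension at most 1, and let Σ be a dense subset of X. Then Σ \ F is dense in X (and hence dense in the open subspace X \ F). -/
/-!
An irreducible component meeting the interior of the closed set `F` meets it in a dense open
subset, so it lies in `F` and has dimension at most `dim F ≤ 1 < 2`. Hence `F` has empty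
interior, and removing a closed set with empty interior from a dense set keeps it dense.
-/

open Set Topology

section

variable {X : Type*} [TopologicalSpace X]

theorem IsPreirreducible.subset_of_inter_interior_nonempty {C F : Set X}
    (hC : IsPreirreducible C) (hF : IsClosed F) (h : (C ∩ _root_.interior F).Nonempty) : C ⊆ F :=
  (subset_closure_inter_of_isPreirreducible_of_isOpen hC isOpen_interior h).trans
    (closure_minimal (inter_subset_right.trans interior_subset) hF)

theorem topologicalKrullDim_mono {A B : Set X} (h : A ⊆ B) :
    topologicalKrullDim A ≤ topologicalKrullDim B :=
  (IsEmbedding.inclusion h).isInducing.topologicalKrullDim_le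

theorem interior_eq_empty_of_topologicalKrullDim_lt {F : Set X} (hF : IsClosed F)
    (hdim : ∀ C ∈ irreducibleComponents X, topologicalKrullDim F < topologicalKrullDim C) :
    interior F = ∅ := by
  refine eq_empty_of_forall_notMem fun x hx => ?_
  have hCF : irreducibleComponent x ⊆ F :=
    isIrreducible_irreducibleComponent.isPreirreducible.subset_of_inter_interior_nonempty hF
      ⟨x, mem_irreducibleComponent, hx⟩
  exact (hdim _ (irreducibleComponent_mem_irreducibleComponents x)).not_ge
    (topologicalKrullDim_mono hCF)

theorem Dense.diff_of_interior_eq_empty {S F : Set X} (hS : Dense S) (hF : IsClosed F)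
    (hint : interior F = ∅) : Dense (S \ F) :=
  hS.inter_of_isOpen_right (interior_eq_empty_iff_dense_compl.1 hint) hF.isOpen_compl

end

/-- Let `X` be a topological space all of whose irreducible components have topological Krull
dimension `2`, let `F ⊆ X` be closed of topological Krull dimension at most `1`, and let `S`
be a dense subset of `X`.  Then `S \ F` is dense in `X`, and hence the corresponding subset is
dense in the open subspace `X \ F`. -/
theorem stmt_6 {X : Type*} [TopologicalSpace X]
    (hcomp : ∀ C ∈ irreducibleComponents X, topologicalKrullDim C = 2)
    (F : Set X) (hF : IsClosed F) (hFdim : topologicalKrullDim F ≤ 1)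
    (S : Set X) (hS : Dense S) :
    Dense (S \ F) ∧ Dense (Subtype.val ⁻¹' S : Set (↥Fᶜ)) := by
  have hint : interior F = ∅ := interior_eq_empty_of_topologicalKrullDim_lt hF fun C hC => by
    rw [hcomp C hC]
    exact hFdim.trans_lt (by norm_num)
  exact ⟨hS.diff_of_interior_eq_empty hF hint, hS.preimage hF.isOpen_compl.isOpenMap_subtype_val⟩
end

section
/- Let R be a commutative local ring with maximal ideal m, let A be a commutative R-algebra, let s be a natural number, let g ∈ A, and let M₁₂, M₂₁, M₂₃, M₃₁, M₃₂ be R-submodules of A. Assume: M₂₁ is a finitely generated R-module; M₁₂ and M₂₃ are each generated by at most s elements as R-modules; M₂₃·M₃₂ = M₁₂·M₂₁; M₁₂·M₂₁ ⊆ m • span_R{1} (the R-submodule of A generated by the images of elements of m under the structure map R → A); M₂₁ = M₂₃·M₃₁; and M₃₁ = M₃₂·M₂₁ + span_R{g}. Then M₂₁ = span_R{g}·M₂₃ (so M₂₁ is generated by at most s elements), and the R-submodule M₁₂·M₂₁ is generated by at most s² elements. -/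
open Pointwise


/-- Module-theoretic content of Corollary 7.8: under the listed relations among the fractional
modules `M i j` of the generalized matrix algebra, `M₂₁ = span_R {g} * M₂₃` and the product
`M₁₂ * M₂₁` is generated by at most `s ^ 2` elements. -/
theorem stmt_11 {R A : Type*} [CommRing R] [IsLocalRing R] [CommRing A] [Algebra R A]
    (s : ℕ) (g : A) (M12 M21 M23 M31 M32 : Submodule R A)
    (hfg : M21.FG)
    (h12 : ∃ S : Finset A, S.card ≤ s ∧ Submodule.span R (S : Set A) = M12)
    (h23 : ∃ S : Finset A, S.card ≤ s ∧ Submodule.span R (S : Set A) = M23)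
    (hBB : M23 * M32 = M12 * M21)
    (hm : M12 * M21 ≤ IsLocalRing.maximalIdeal R • (Submodule.span R {1} : Submodule R A))
    (h1 : M21 = M23 * M31)
    (h2 : M31 = M32 * M21 + Submodule.span R {g}) :
    M21 = Submodule.span R {g} * M23 ∧
    ∃ S : Finset A, S.card ≤ s ^ 2 ∧ Submodule.span R (S : Set A) = M12 * M21 := by
  classical
  obtain ⟨S12, hc12, hs12⟩ := h12
  obtain ⟨S23, hc23, hs23⟩ := h23
  have hone : (Submodule.span R {1} : Submodule R A) = 1 := by
    exact Submodule.one_eq_span.symm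
  rw [hone] at hm
  -- (m • 1) * N ≤ m • N
  have key1 : ∀ N : Submodule R A,
      (IsLocalRing.maximalIdeal R • (1 : Submodule R A)) * N ≤
        IsLocalRing.maximalIdeal R • N := by
    intro N
    rw [Submodule.mul_le]
    intro x hx y hy
    refine Submodule.smul_induction_on hx (fun r hr z hz => ?_) (fun a b ha hb => ?_)
    · rw [smul_mul_assoc]
      exact Submodule.smul_mem_smul hr ((one_mul N) ▸ Submodule.mul_mem_mul hz hy)
    · rw [add_mul]; exact add_mem ha hb
  -- M21 ≤ span{g} * M23 ⊔ m • M21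
  have hNN : M21 ≤ Submodule.span R {g} * M23 ⊔ IsLocalRing.maximalIdeal R • M21 := by
    calc M21 = M23 * M31 := h1
      _ = M23 * (M32 * M21) + M23 * Submodule.span R {g} := by rw [h2, mul_add]
      _ = (M23 * M32) * M21 + Submodule.span R {g} * M23 := by ring
      _ = (M12 * M21) * M21 + Submodule.span R {g} * M23 := by rw [hBB]
      _ ≤ Submodule.span R {g} * M23 ⊔ IsLocalRing.maximalIdeal R • M21 := by
          refine sup_le (le_trans ?_ le_sup_right) le_sup_left
          exact le_trans (mul_le_mul' hm le_rfl) (key1 M21)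
  have hle : M21 ≤ Submodule.span R {g} * M23 :=
    Submodule.le_of_le_smul_of_le_jacobson_bot hfg
      (IsLocalRing.maximalIdeal_le_jacobson ⊥) hNN
  have hge : Submodule.span R {g} * M23 ≤ M21 := by
    rw [h1, mul_comm]
    refine mul_le_mul' le_rfl ?_
    rw [h2]; exact le_sup_right
  have hEq : M21 = Submodule.span R {g} * M23 := le_antisymm hle hge
  refine ⟨hEq, ?_⟩
  refine ⟨S12 * (({g} : Finset A) * S23), ?_, ?_⟩
  · calc (S12 * ({g} * S23)).card ≤ S12.card * ({g} * S23).card := Finset.card_mul_le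
      _ ≤ S12.card * (({g} : Finset A).card * S23.card) :=
          Nat.mul_le_mul_left _ Finset.card_mul_le
      _ = S12.card * S23.card := by rw [Finset.card_singleton, one_mul]
      _ ≤ s * s := Nat.mul_le_mul hc12 hc23
      _ = s ^ 2 := (sq s).symm
  · rw [Finset.coe_mul, Finset.coe_mul, Finset.coe_singleton,
      ← Submodule.span_mul_span, ← Submodule.span_mul_span, hs12, hs23, ← hEq]
end
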